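/- arXiv:2109.05254 — 2 statements merged into one kernel-verified Lean document; each statement's English description precedes it below -/
import Mathlib

section
/- For any a > 0 and b, v₁ ∈ ℝ, let u(s) = arctanh(√(1 − a e^{2s})) + b for s < −(log a)/2 (so that 0 < a e^{2s} < 1). Then 1 − u'(s)² < 0 for all such s, and the cylindrical surface X(s,t) = (t, s, u(s)) satisfies the translating soliton equation with respect to v = (v₁, 1, 0) at every point (s,t) with s < −(log a)/2 (equivalently, u solves u'' = (u'² − 1)u'). -/
noncomputable section

/-- The Lorentzian (Minkowski) inner product on ℝ³:
`⟨a,b⟩ = a₁b₁ + a₂b₂ − a₃b₃`. -/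
def mink (a b : Fin 3 → ℝ) : ℝ := a 0 * b 0 + a 1 * b 1 - a 2 * b 2

/-- Determinant of the 3×3 matrix with rows `a`, `b`, `c`. -/
def det3 (a b c : Fin 3 → ℝ) : ℝ :=
  a 0 * (b 1 * c 2 - b 2 * c 1) - a 1 * (b 0 * c 2 - b 2 * c 0)
    + a 2 * (b 0 * c 1 - b 1 * c 0)

/-- Partial derivative `X_s` of a parametrized surface `X(s,t)`. -/
def pS (X : ℝ → ℝ → Fin 3 → ℝ) (s t : ℝ) : Fin 3 → ℝ := deriv (fun a => X a t) s

/-- Partial derivative `X_t`. -/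
def pT (X : ℝ → ℝ → Fin 3 → ℝ) (s t : ℝ) : Fin 3 → ℝ := deriv (fun b => X s b) t

/-- Second partial derivative `X_ss`. -/
def pSS (X : ℝ → ℝ → Fin 3 → ℝ) (s t : ℝ) : Fin 3 → ℝ := deriv (fun a => pS X a t) s

/-- Mixed second partial derivative `X_st`. -/
def pST (X : ℝ → ℝ → Fin 3 → ℝ) (s t : ℝ) : Fin 3 → ℝ := deriv (fun a => pT X a t) s

/-- Second partial derivative `X_tt`. -/
def pTT (X : ℝ → ℝ → Fin 3 → ℝ) (s t : ℝ) : Fin 3 → ℝ := deriv (fun b => pT X s b) t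

/-- Coefficient `E = ⟨X_s, X_s⟩` of the first fundamental form. -/
def coefE (X : ℝ → ℝ → Fin 3 → ℝ) (s t : ℝ) : ℝ := mink (pS X s t) (pS X s t)

/-- Coefficient `F = ⟨X_s, X_t⟩` of the first fundamental form. -/
def coefF (X : ℝ → ℝ → Fin 3 → ℝ) (s t : ℝ) : ℝ := mink (pS X s t) (pT X s t)

/-- Coefficient `G = ⟨X_t, X_t⟩` of the first fundamental form. -/
def coefG (X : ℝ → ℝ → Fin 3 → ℝ) (s t : ℝ) : ℝ := mink (pT X s t) (pT X s t)

/-- `EG − F²` at `(s,t)`. -/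
def disc (X : ℝ → ℝ → Fin 3 → ℝ) (s t : ℝ) : ℝ :=
  coefE X s t * coefG X s t - coefF X s t ^ 2

/-- The translating soliton equation with respect to the velocity `v` at the point `(s,t)`:
`E·det(X_s,X_t,X_tt) − 2F·det(X_s,X_t,X_st) + G·det(X_s,X_t,X_ss)
  = −|EG − F²|·det(X_s,X_t,v)`. -/
def SolitonEqAt (X : ℝ → ℝ → Fin 3 → ℝ) (v : Fin 3 → ℝ) (s t : ℝ) : Prop :=
  coefE X s t * det3 (pS X s t) (pT X s t) (pTT X s t)
    - 2 * coefF X s t * det3 (pS X s t) (pT X s t) (pST X s t)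
    + coefG X s t * det3 (pS X s t) (pT X s t) (pSS X s t)
  = -|disc X s t| * det3 (pS X s t) (pT X s t) v

/-- The inverse hyperbolic tangent, `arctanh x = (1/2)·log((1+x)/(1−x))`. -/
def arctanh (x : ℝ) : ℝ := (1 / 2) * Real.log ((1 + x) / (1 - x))

/-! With `w = a e^{2s} ∈ (0, 1)` the profile satisfies `u' = -1 / √(1 - w)`, hence
`u'² = 1 / (1 - w) > 1` and `u'' = -w (1 - w)^{-3/2} = (u'² - 1) u'`. On the cylinder
`X(s,t) = (t, s, u(s))` one has `X_t = e₁`, `X_st = X_tt = 0`, `E = 1 - u'²`, `F = 0`, `G = 1`, so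
the soliton equation with respect to `v` reduces to the ODE `u'' = |1 - u'²| (v₂ u' - v₃)`, which
for `v = (v₁, 1, 0)` and `u'² > 1` is the one above. -/

open Real Topology

theorem hasDerivAt_arctanh {x : ℝ} (hx₀ : -1 < x) (hx₁ : x < 1) :
    HasDerivAt arctanh (1 - x ^ 2)⁻¹ x := by
  have hp : 1 + x ≠ 0 := by linarith
  have hm : 1 - x ≠ 0 := by linarith
  have hpm : 1 - x ^ 2 ≠ 0 := by nlinarith
  have hquot : HasDerivAt (fun y => (1 + y) / (1 - y)) (2 / (1 - x) ^ 2) x :=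
    (((hasDerivAt_id' x).const_add 1).div ((hasDerivAt_id' x).const_sub 1) hm).congr_deriv
      (by ring)
  refine ((hquot.log (div_ne_zero hp hm)).const_mul (1 / 2)).congr_deriv ?_
  field_simp
  ring

section Profile

variable {a s : ℝ}

theorem mul_exp_two_mul_lt_one (ha : 0 < a) (hs : s < -log a / 2) : a * exp (2 * s) < 1 := by
  calc a * exp (2 * s) < a * exp (-log a) := by gcongr; linarith
    _ = 1 := by rw [exp_neg, exp_log ha, mul_inv_cancel₀ ha.ne']

theorem hasDerivAt_sqrt_one_sub_mul_exp (hs : a * exp (2 * s) < 1) :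
    HasDerivAt (fun s => √(1 - a * exp (2 * s)))
      (-(a * exp (2 * s)) / √(1 - a * exp (2 * s))) s := by
  have hlin : HasDerivAt (fun s => 1 - a * exp (2 * s)) (-(2 * (a * exp (2 * s)))) s :=
    ((((hasDerivAt_id' s).const_mul 2).exp.const_mul a).const_sub 1).congr_deriv (by ring)
  refine (hlin.sqrt (by linarith)).congr_deriv ?_
  field_simp

theorem hasDerivAt_arctanh_sqrt_one_sub_mul_exp (ha : 0 < a) (hs : a * exp (2 * s) < 1)
    (b : ℝ) :
    HasDerivAt (fun s => arctanh (√(1 - a * exp (2 * s))) + b)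
      (-1 / √(1 - a * exp (2 * s))) s := by
  have hw : 0 < a * exp (2 * s) := by positivity
  have hx : 0 < √(1 - a * exp (2 * s)) := sqrt_pos.2 (by linarith)
  have hx₂ : √(1 - a * exp (2 * s)) ^ 2 = 1 - a * exp (2 * s) := sq_sqrt (by linarith)
  have hx₁ : √(1 - a * exp (2 * s)) < 1 := by nlinarith
  refine (((hasDerivAt_arctanh (by linarith) hx₁).comp s
    (hasDerivAt_sqrt_one_sub_mul_exp hs)).add_const b).congr_deriv ?_
  rw [hx₂]
  field_simp
  ring

theorem hasDerivAt_neg_inv_sqrt_one_sub_mul_exp (hs : a * exp (2 * s) < 1) :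
    HasDerivAt (fun s => -1 / √(1 - a * exp (2 * s)))
      (((-1 / √(1 - a * exp (2 * s))) ^ 2 - 1) * (-1 / √(1 - a * exp (2 * s)))) s := by
  have hx : 0 < √(1 - a * exp (2 * s)) := sqrt_pos.2 (by linarith)
  have hx₂ : √(1 - a * exp (2 * s)) ^ 2 = 1 - a * exp (2 * s) := sq_sqrt (by linarith)
  refine ((hasDerivAt_const s (-1 : ℝ)).div (hasDerivAt_sqrt_one_sub_mul_exp hs)
    hx.ne').congr_deriv ?_
  field_simp
  linear_combination (-1) * hx₂

theorem one_sub_sq_neg_inv_sqrt_one_sub_mul_exp_neg (ha : 0 < a) (hs : a * exp (2 * s) < 1) :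
    1 - (-1 / √(1 - a * exp (2 * s))) ^ 2 < 0 := by
  have hx₂ : √(1 - a * exp (2 * s)) ^ 2 = 1 - a * exp (2 * s) := sq_sqrt (by linarith)
  rw [div_pow, hx₂, sub_neg, neg_one_sq, one_lt_div (by linarith)]
  linarith [mul_pos ha (exp_pos (2 * s))]

end Profile

section Cylinder

def cylinder (u : ℝ → ℝ) : ℝ → ℝ → Fin 3 → ℝ := fun s t => ![t, s, u s]

variable {u : ℝ → ℝ} {s : ℝ}

theorem pT_cylinder (u : ℝ → ℝ) (s t : ℝ) : pT (cylinder u) s t = ![1, 0, 0] :=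
  (hasDerivAt_pi.2 fun i => by
    fin_cases i
    exacts [hasDerivAt_id' t, hasDerivAt_const t s, hasDerivAt_const t (u s)]).deriv

theorem pST_cylinder (u : ℝ → ℝ) (s t : ℝ) : pST (cylinder u) s t = 0 := by
  simp only [pST, pT_cylinder, deriv_const]

theorem pTT_cylinder (u : ℝ → ℝ) (s t : ℝ) : pTT (cylinder u) s t = 0 := by
  simp only [pTT, pT_cylinder, deriv_const]

theorem pS_cylinder (hu : DifferentiableAt ℝ u s) (t : ℝ) :
    pS (cylinder u) s t = ![0, 1, deriv u s] :=
  (hasDerivAt_pi.2 fun i => by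
    fin_cases i
    exacts [hasDerivAt_const s t, hasDerivAt_id' s, hu.hasDerivAt]).deriv

theorem pSS_cylinder (hu : ∀ᶠ r in 𝓝 s, DifferentiableAt ℝ u r)
    (hu' : DifferentiableAt ℝ (deriv u) s) (t : ℝ) :
    pSS (cylinder u) s t = ![0, 0, deriv (deriv u) s] := by
  have hpS : (fun r => pS (cylinder u) r t) =ᶠ[𝓝 s] fun r => ![0, 1, deriv u r] :=
    hu.mono fun r hr => pS_cylinder hr t
  rw [pSS, hpS.deriv_eq]
  exact (hasDerivAt_pi.2 fun i => by
    fin_cases i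
    exacts [hasDerivAt_const s 0, hasDerivAt_const s 1, hu'.hasDerivAt]).deriv

theorem solitonEqAt_cylinder_iff (hu : ∀ᶠ r in 𝓝 s, DifferentiableAt ℝ u r)
    (hu' : DifferentiableAt ℝ (deriv u) s) (v : Fin 3 → ℝ) (t : ℝ) :
    SolitonEqAt (cylinder u) v s t ↔
      deriv (deriv u) s = |1 - deriv u s ^ 2| * (v 1 * deriv u s - v 2) := by
  have hX_s := pS_cylinder hu.self_of_nhds t
  have hdisc : disc (cylinder u) s t = 1 - deriv u s ^ 2 := by
    simp only [disc, coefE, coefF, coefG, mink, hX_s, pT_cylinder, Matrix.cons_val_zero,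
      Matrix.cons_val_one, Matrix.cons_val_two, Matrix.head_cons, Matrix.tail_cons]
    ring
  rw [SolitonEqAt, hdisc, coefE, coefF, coefG, hX_s, pT_cylinder, pST_cylinder, pTT_cylinder,
    pSS_cylinder hu hu']
  simp only [mink, det3, Matrix.cons_val_zero, Matrix.cons_val_one, Matrix.cons_val_two,
    Matrix.head_cons, Matrix.tail_cons, Pi.zero_apply]
  constructor <;> intro h <;> linear_combination (-1 : ℝ) * h

end Cylinder

/-- For `a > 0`, the function `u(s) = arctanh(√(1 − a·e²ˢ)) + b`, for
`s < −(log a)/2`, satisfies `1 − u'² < 0` and `u'' = (u'² − 1)u'` on that domain, and the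
cylindrical surface `X(s,t) = (t, s, u(s))` is a translating soliton with respect to
`v = (v₁,1,0)` at every point `(s,t)` with `s < −(log a)/2`. -/
theorem stmt8 (a b v₁ : ℝ) (ha : 0 < a) (u : ℝ → ℝ)
    (hu : u = fun s => arctanh (Real.sqrt (1 - a * Real.exp (2 * s))) + b) :
    (∀ s : ℝ, s < -(Real.log a) / 2 → 1 - (deriv u s) ^ 2 < 0) ∧
    (∀ s : ℝ, s < -(Real.log a) / 2 →
        deriv (deriv u) s = ((deriv u s) ^ 2 - 1) * deriv u s) ∧
    (∀ s t : ℝ, s < -(Real.log a) / 2 →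
        SolitonEqAt (fun s t => ![t, s, u s]) ![v₁, 1, 0] s t) := by
  have hw {s : ℝ} (hs : s < -log a / 2) := mul_exp_two_mul_lt_one ha hs
  have hu_deriv {s : ℝ} (hs : s < -log a / 2) : HasDerivAt u (-1 / √(1 - a * exp (2 * s))) s :=
    hu ▸ hasDerivAt_arctanh_sqrt_one_sub_mul_exp ha (hw hs) b
  have hu_deriv_eq {s : ℝ} (hs : s < -log a / 2) : deriv u s = -1 / √(1 - a * exp (2 * s)) :=
    (hu_deriv hs).deriv
  have hu_deriv2 {s : ℝ} (hs : s < -log a / 2) :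
      HasDerivAt (deriv u) ((deriv u s ^ 2 - 1) * deriv u s) s := by
    rw [hu_deriv_eq hs]
    exact (hasDerivAt_neg_inv_sqrt_one_sub_mul_exp (hw hs)).congr_of_eventuallyEq
      (eventually_lt_nhds hs |>.mono fun r hr => hu_deriv_eq hr)
  have htimelike {s : ℝ} (hs : s < -log a / 2) : 1 - deriv u s ^ 2 < 0 := by
    rw [hu_deriv_eq hs]
    exact one_sub_sq_neg_inv_sqrt_one_sub_mul_exp_neg ha (hw hs)
  refine ⟨fun s hs => htimelike hs, fun s hs => (hu_deriv2 hs).deriv, fun s t hs => ?_⟩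
  have hu_diff : ∀ᶠ r in 𝓝 s, DifferentiableAt ℝ u r :=
    eventually_lt_nhds hs |>.mono fun r hr => (hu_deriv hr).differentiableAt
  change SolitonEqAt (cylinder u) _ s t
  rw [solitonEqAt_cylinder_iff hu_diff (hu_deriv2 hs).differentiableAt, (hu_deriv2 hs).deriv,
    abs_of_neg (htimelike hs)]
  simp only [Matrix.cons_val_zero, Matrix.cons_val_one, Matrix.cons_val_two, Matrix.head_cons,
    Matrix.tail_cons]
  ring
end
end

section
/- (Explicit example of a non-cylindrical ruled translating soliton.) Define X(s,t) = (log s + t, 1/(2s) + t·s, −1/(2s) + t·s) for s > 0 and t > 1/2, i.e., the ruled surface with base curve γ(s) = (log s, 1/(2s), −1/(2s)) and ruling direction w(s) = (1, s, s). Then at every such (s,t) one has EG − F² = (1 − 2t)/s² < 0 (the surface is timelike, hence non-degenerate), and X satisfies the translating soliton equation with respect to v = (1, 0, 0). -/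
noncomputable section

/-!
`X` is the ruled surface `γ(s) + t • w(s)` over the base curve `γ(s) = (log s, 1/(2s), −1/(2s))`
with rulings `w(s) = (1, s, s)`, so `X_t = w`, `X_tt = 0`, `X_st = w'` and `X_ss = γ'' + t w''`.
Substituting these derivatives turns both claims into rational identities in `s` and `t`.
-/

open Topology

lemma hasDerivAt_vec3 {f₀ f₁ f₂ : ℝ → ℝ} {d₀ d₁ d₂ x : ℝ} (h₀ : HasDerivAt f₀ d₀ x)
    (h₁ : HasDerivAt f₁ d₁ x) (h₂ : HasDerivAt f₂ d₂ x) :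
    HasDerivAt (fun a => ![f₀ a, f₁ a, f₂ a]) ![d₀, d₁, d₂] x :=
  hasDerivAt_pi.mpr fun i => by fin_cases i <;> simpa

def ruledSurface (γ w : ℝ → Fin 3 → ℝ) (s t : ℝ) : Fin 3 → ℝ := γ s + t • w s

lemma pT_ruledSurface (γ w : ℝ → Fin 3 → ℝ) (s t : ℝ) : pT (ruledSurface γ w) s t = w s :=
  (((hasDerivAt_id t).smul_const (w s)).const_add (γ s)).deriv.trans (one_smul ℝ _)

lemma pTT_ruledSurface (γ w : ℝ → Fin 3 → ℝ) (s t : ℝ) : pTT (ruledSurface γ w) s t = 0 := by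
  simp only [pTT, pT_ruledSurface, deriv_const]

lemma pST_ruledSurface (γ w : ℝ → Fin 3 → ℝ) (s t : ℝ) :
    pST (ruledSurface γ w) s t = deriv w s := by
  simp only [pST, pT_ruledSurface]

lemma pS_ruledSurface {γ w : ℝ → Fin 3 → ℝ} {γ' w' : Fin 3 → ℝ} {s : ℝ}
    (hγ : HasDerivAt γ γ' s) (hw : HasDerivAt w w' s) (t : ℝ) :
    pS (ruledSurface γ w) s t = γ' + t • w' :=
  (hγ.add (hw.const_smul t)).deriv

lemma pSS_ruledSurface {γ w γ' w' : ℝ → Fin 3 → ℝ} {γ'' w'' : Fin 3 → ℝ} {s : ℝ}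
    (hγ : ∀ᶠ a in 𝓝 s, HasDerivAt γ (γ' a) a)
    (hw : ∀ᶠ a in 𝓝 s, HasDerivAt w (w' a) a) (hγ' : HasDerivAt γ' γ'' s)
    (hw' : HasDerivAt w' w'' s) (t : ℝ) :
    pSS (ruledSurface γ w) s t = γ'' + t • w'' := by
  have hpS : (fun a => pS (ruledSurface γ w) a t) =ᶠ[𝓝 s] fun a => γ' a + t • w' a := by
    filter_upwards [hγ, hw] with a hγa hwa using pS_ruledSurface hγa hwa t
  rw [pSS, hpS.deriv_eq]
  exact (hγ'.add (hw'.const_smul t)).deriv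

def baseCurve (s : ℝ) : Fin 3 → ℝ := ![Real.log s, 1 / (2 * s), -(1 / (2 * s))]

def rulingDir (s : ℝ) : Fin 3 → ℝ := ![1, s, s]

abbrev translator : ℝ → ℝ → Fin 3 → ℝ := ruledSurface baseCurve rulingDir

lemma translator_eq :
    translator
      = fun s t => ![Real.log s + t, 1 / (2 * s) + t * s, -(1 / (2 * s)) + t * s] := by
  funext s t i
  fin_cases i <;> simp [ruledSurface, baseCurve, rulingDir]

lemma hasDerivAt_baseCurve {s : ℝ} (hs : 0 < s) :
    HasDerivAt baseCurve ![s⁻¹, -(1 / (2 * s ^ 2)), 1 / (2 * s ^ 2)] s := by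
  have hinv : HasDerivAt (fun a : ℝ => 1 / (2 * a)) (-(1 / (2 * s ^ 2))) s := by
    simp only [one_div, mul_inv]
    exact ((hasDerivAt_inv hs.ne').const_mul _).congr_deriv (by ring)
  exact hasDerivAt_vec3 (Real.hasDerivAt_log hs.ne') hinv (hinv.fun_neg.congr_deriv (neg_neg _))

lemma hasDerivAt_baseCurve_deriv {s : ℝ} (hs : s ≠ 0) :
    HasDerivAt (fun a : ℝ => ![a⁻¹, -(1 / (2 * a ^ 2)), 1 / (2 * a ^ 2)])
      ![-(s ^ 2)⁻¹, 1 / s ^ 3, -(1 / s ^ 3)] s := by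
  have hinv : HasDerivAt (fun a : ℝ => 1 / (2 * a ^ 2)) (-(1 / s ^ 3)) s := by
    simp only [one_div, mul_inv]
    exact (((hasDerivAt_pow 2 s).inv (by positivity)).const_mul _).congr_deriv (by field_simp; ring)
  exact hasDerivAt_vec3 (hasDerivAt_inv hs) (hinv.fun_neg.congr_deriv (neg_neg _)) hinv

lemma hasDerivAt_rulingDir (s : ℝ) : HasDerivAt rulingDir ![0, 1, 1] s :=
  hasDerivAt_vec3 (hasDerivAt_const s 1) (hasDerivAt_id s) (hasDerivAt_id s)

section Translator

variable {s : ℝ} (t : ℝ)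

lemma pS_translator (hs : 0 < s) :
    pS translator s t = ![s⁻¹, -(1 / (2 * s ^ 2)), 1 / (2 * s ^ 2)] + t • ![0, 1, 1] :=
  pS_ruledSurface (hasDerivAt_baseCurve hs) (hasDerivAt_rulingDir s) t

lemma pSS_translator (hs : 0 < s) :
    pSS translator s t = ![-(s ^ 2)⁻¹, 1 / s ^ 3, -(1 / s ^ 3)] := by
  rw [pSS_ruledSurface ((eventually_gt_nhds hs).mono fun _ => hasDerivAt_baseCurve)
    (.of_forall hasDerivAt_rulingDir) (hasDerivAt_baseCurve_deriv hs.ne') (hasDerivAt_const s _) t,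
    smul_zero, add_zero]

lemma disc_translator (hs : 0 < s) :
    disc translator s t = (1 - 2 * t) / s ^ 2 := by
  simp only [disc, coefE, coefF, coefG, mink, pS_translator t hs, pT_ruledSurface, rulingDir,
    Pi.add_apply, Pi.smul_apply, smul_eq_mul, Matrix.cons_val_zero, Matrix.cons_val_one,
    Matrix.cons_val_two, Matrix.tail_cons, Matrix.head_cons]
  field_simp
  ring

lemma disc_translator_neg (hs : 0 < s) (ht : 1 / 2 < t) :
    disc translator s t < 0 := by
  rw [disc_translator t hs]
  exact div_neg_of_neg_of_pos (by linarith) (by positivity)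

lemma solitonEqAt_translator (hs : 0 < s) (ht : 1 / 2 < t) :
    SolitonEqAt translator ![1, 0, 0] s t := by
  rw [SolitonEqAt, abs_of_neg (disc_translator_neg t hs ht), disc_translator t hs]
  simp only [coefE, coefF, coefG, mink, det3, pS_translator t hs, pSS_translator t hs,
    pT_ruledSurface,
    pST_ruledSurface, pTT_ruledSurface, (hasDerivAt_rulingDir s).deriv, rulingDir,
    Pi.add_apply, Pi.smul_apply, Pi.zero_apply, smul_eq_mul, Matrix.cons_val_zero,
    Matrix.cons_val_one, Matrix.cons_val_two, Matrix.tail_cons, Matrix.head_cons]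
  field_simp
  ring

end Translator

/-- the ruled surface `X(s,t) = (log s + t, 1/(2s) + ts, −1/(2s) + ts)`,
`s > 0`, `t > 1/2` (base curve `γ(s) = (log s, 1/(2s), −1/(2s))`, ruling direction
`w(s) = (1,s,s)`), is timelike with `EG − F² = (1 − 2t)/s² < 0` and is a non-cylindrical
ruled translating soliton with respect to `v = (1,0,0)`. -/
theorem stmt18 :
    ∀ s t : ℝ, 0 < s → 1 / 2 < t →
      disc (fun s t => ![Real.log s + t, 1 / (2 * s) + t * s, -(1 / (2 * s)) + t * s]) s t
          = (1 - 2 * t) / s ^ 2 ∧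
      disc (fun s t => ![Real.log s + t, 1 / (2 * s) + t * s, -(1 / (2 * s)) + t * s]) s t
          < 0 ∧
      SolitonEqAt
        (fun s t => ![Real.log s + t, 1 / (2 * s) + t * s, -(1 / (2 * s)) + t * s])
        ![1, 0, 0] s t := by
  intro s t hs ht
  rw [← translator_eq]
  exact ⟨disc_translator t hs, disc_translator_neg t hs ht, solitonEqAt_translator t hs ht⟩
end
end
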